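/- arXiv:1003.2153 — 12 statements merged into one kernel-verified Lean document; each statement's English description precedes it below -/
import Mathlib

section
/- Let A : Fin n → EuclideanSpace ℝ (Fin 2) be the vertices of a polygon (with A i ≠ A (i+1) for all i, indices taken cyclically modulo n, and n ≥ 3), let M be a point, and for each i let M_i be the orthogonal projection of M onto the line through A i and A (i+1). Then ∑_{i} dist(M_i, A i)^2 = ∑_{i} dist(M_i, A (i+1))^2. -/
/-! By Pythagoras in the right triangles `M Mᵢ Aᵢ` and `M Mᵢ Aᵢ₊₁`,
`MᵢAᵢ² - MᵢAᵢ₊₁² = MAᵢ² - MAᵢ₊₁²`, and the right-hand side sums to zero around the polygon. -/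

namespace EuclideanGeometry

variable {V P : Type*} [NormedAddCommGroup V] [InnerProductSpace ℝ V] [MetricSpace P]
  [NormedAddTorsor V P]

theorem dist_orthogonalProjection_sq_sub_dist_orthogonalProjection_sq
    {s : AffineSubspace ℝ P} [Nonempty s] [s.direction.HasOrthogonalProjection]
    (M : P) {X Y : P} (hX : X ∈ s) (hY : Y ∈ s) :
    dist (orthogonalProjection s M : P) X ^ 2 - dist (orthogonalProjection s M : P) Y ^ 2
      = dist M X ^ 2 - dist M Y ^ 2 := by
  have hXM := dist_sq_eq_dist_orthogonalProjection_sq_add_dist_orthogonalProjection_sq M hX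
  have hYM := dist_sq_eq_dist_orthogonalProjection_sq_add_dist_orthogonalProjection_sq M hY
  rw [dist_comm _ X, dist_comm _ Y, dist_comm M X, dist_comm M Y]
  linear_combination hYM - hXM

end EuclideanGeometry

theorem polygon_projection_sum_sq
    (n : ℕ) (hn : 3 ≤ n)
    (A : Fin n → EuclideanSpace ℝ (Fin 2))
    (M : EuclideanSpace ℝ (Fin 2))
    (Mi : Fin n → EuclideanSpace ℝ (Fin 2))
    (hMi : ∀ i : Fin n,
      Mi i = EuclideanGeometry.orthogonalProjection
        (affineSpan ℝ {A i, A (i + ⟨1, by omega⟩)}) M) :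
    ∑ i : Fin n, dist (Mi i) (A i) ^ 2
      = ∑ i : Fin n, dist (Mi i) (A (i + ⟨1, by omega⟩)) ^ 2 := by
  have hside : ∀ i : Fin n,
      dist (Mi i) (A i) ^ 2 - dist (Mi i) (A (i + ⟨1, by omega⟩)) ^ 2
        = dist M (A i) ^ 2 - dist M (A (i + ⟨1, by omega⟩)) ^ 2 := fun i => by
    rw [hMi i]
    exact EuclideanGeometry.dist_orthogonalProjection_sq_sub_dist_orthogonalProjection_sq M
      (left_mem_affineSpan_pair ℝ _ _) (right_mem_affineSpan_pair ℝ _ _)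
  have : NeZero n := ⟨by omega⟩
  rw [← sub_eq_zero, ← Finset.sum_sub_distrib]
  simp only [hside, Finset.sum_sub_distrib]
  exact sub_eq_zero.mpr (Equiv.sum_comp (Equiv.addRight ⟨1, by omega⟩) fun i => dist M (A i) ^ 2).symm
end

section
/- Let A, B, C be affinely independent points of the Euclidean plane, let A' lie strictly between B and C, let B' lie strictly between C and A, let C' lie strictly between A and B, and let P be a point lying strictly between A and A', strictly between B and B', and strictly between C and C'. Then dist(P,A)/dist(P,A') + dist(P,B)/dist(P,B') + dist(P,C)/dist(P,C') ≥ 6. -/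
/-!
Let `(α, β, γ)` be the barycentric coordinates of `P` in the triangle `ABC`. Since `A'` lies on
`BC`, where the `A`-coordinate vanishes, `dist P A / dist P A' = (1 - α) / α`, and similarly for
the other two cevians. As `α + β + γ = 1`, the tangent line bound `(1 - x) / x ≥ 5 - 9 x` at
`x = 1/3` sums to `6`.
-/

open AffineMap

namespace AffineBasis

variable {ι k V P : Type*} [Ring k] [AddCommGroup V] [Module k V] [AddTorsor V P]

theorem coord_lineMap_of_mem_affineSpan_pair (b : AffineBasis ι k P) {i j l : ι}
    (hj : i ≠ j) (hl : i ≠ l) {q : P} (hq : q ∈ line[k, b j, b l]) (t : k) :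
    b.coord i (lineMap (b i) q t) = 1 - t := by
  obtain ⟨s, rfl⟩ := mem_affineSpan_pair_iff_exists_lineMap_eq.mp hq
  simp only [apply_lineMap, coord_apply_eq, coord_apply_ne _ hj, coord_apply_ne _ hl,
    lineMap_same_apply, lineMap_apply_ring, mul_one, mul_zero, add_zero]

end AffineBasis

theorem Sbtw.exists_lineMap_eq_and_dist_div_dist_eq {V P : Type*} [NormedAddCommGroup V]
    [NormedSpace ℝ V] [MetricSpace P] [NormedAddTorsor V P] {x y z : P} (h : Sbtw ℝ x y z) :
    ∃ t ∈ Set.Ioo (0 : ℝ) 1, lineMap x z t = y ∧ dist y x / dist y z = t / (1 - t) := by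
  obtain ⟨t, ⟨ht0, ht1⟩, rfl⟩ := h.mem_image_Ioo
  refine ⟨t, ⟨ht0, ht1⟩, rfl, ?_⟩
  have hxz : dist x z ≠ 0 := dist_ne_zero.mpr h.left_ne_right
  rw [dist_lineMap_left, dist_lineMap_right, Real.norm_of_nonneg ht0.le,
    Real.norm_of_nonneg (sub_nonneg.mpr ht1.le), mul_div_mul_right _ _ hxz]

theorem AffineBasis.dist_div_dist_of_sbtw {ι V P : Type*} [NormedAddCommGroup V]
    [NormedSpace ℝ V] [MetricSpace P] [NormedAddTorsor V P] (b : AffineBasis ι ℝ P)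
    {i j l : ι} (hj : i ≠ j) (hl : i ≠ l) {q x : P} (hq : q ∈ line[ℝ, b j, b l])
    (hx : Sbtw ℝ (b i) x q) :
    0 < b.coord i x ∧ dist x (b i) / dist x q = (1 - b.coord i x) / b.coord i x := by
  obtain ⟨t, ⟨ht0, ht1⟩, rfl, hratio⟩ := hx.exists_lineMap_eq_and_dist_div_dist_eq
  rw [hratio, b.coord_lineMap_of_mem_affineSpan_pair hj hl hq, sub_sub_cancel]
  exact ⟨sub_pos.mpr ht1, rfl⟩

theorem six_le_sum_one_sub_div_self {x y z : ℝ} (hx : 0 < x) (hy : 0 < y) (hz : 0 < z)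
    (hsum : x + y + z = 1) : 6 ≤ (1 - x) / x + (1 - y) / y + (1 - z) / z := by
  have tangent {w : ℝ} (hw : 0 < w) : 5 - 9 * w ≤ (1 - w) / w := by
    rw [le_div_iff₀ hw]; nlinarith [sq_nonneg (3 * w - 1)]
  linarith [tangent hx, tangent hy, tangent hz]

theorem cevian_ratio_sum_ge_six
    (A B C A' B' C' P : EuclideanSpace ℝ (Fin 2))
    (hABC : AffineIndependent ℝ ![A, B, C])
    (hA' : Sbtw ℝ B A' C) (hB' : Sbtw ℝ C B' A) (hC' : Sbtw ℝ A C' B)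
    (hPA : Sbtw ℝ A P A') (hPB : Sbtw ℝ B P B') (hPC : Sbtw ℝ C P C') :
    dist P A / dist P A' + dist P B / dist P B' + dist P C / dist P C' ≥ 6 := by
  have hspan : affineSpan ℝ (Set.range ![A, B, C]) = ⊤ := by
    rw [hABC.affineSpan_eq_top_iff_card_eq_finrank_add_one, finrank_euclideanSpace_fin]
    rfl
  let b : AffineBasis (Fin 3) ℝ (EuclideanSpace ℝ (Fin 2)) := ⟨![A, B, C], hABC, hspan⟩
  obtain ⟨hα, hrA⟩ := b.dist_div_dist_of_sbtw (i := 0) (j := 1) (l := 2) (by decide) (by decide)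
    hA'.wbtw.mem_affineSpan hPA
  obtain ⟨hβ, hrB⟩ := b.dist_div_dist_of_sbtw (i := 1) (j := 2) (l := 0) (by decide) (by decide)
    hB'.wbtw.mem_affineSpan hPB
  obtain ⟨hγ, hrC⟩ := b.dist_div_dist_of_sbtw (i := 2) (j := 0) (l := 1) (by decide) (by decide)
    hC'.wbtw.mem_affineSpan hPC
  have hsum := b.sum_coord_apply_eq_one P
  rw [Fin.sum_univ_three] at hsum
  exact hrA ▸ hrB ▸ hrC ▸ six_le_sum_one_sub_div_self hα hβ hγ hsum
end

section
/- Let A, B, C be affinely independent points of the Euclidean plane, let A' lie strictly between B and C, let B' lie strictly between C and A, let C' lie strictly between A and B, and let P be a point lying strictly between A and A', strictly between B and B', and strictly between C and C'. Then (dist(P,A)/dist(P,A')) · (dist(P,B)/dist(P,B')) · (dist(P,C)/dist(P,C')) ≥ 8. -/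
/-!
If `a, b, c > 0` are the barycentric coordinates of `P` (so `a + b + c = 1`), then the cevian
through `A` is cut by `P` in the ratio `PA / PA' = (b + c) / a`, and similarly for the other two.
The product `(b + c)(c + a)(a + b) / (abc)` is at least `8` by AM–GM, since
`(b + c)(c + a)(a + b) - 8abc = a(b - c)² + b(c - a)² + c(a - b)²`.
-/

open AffineMap

lemma exists_barycentric_of_sbtw_of_sbtw {V : Type*} [NormedAddCommGroup V] [NormedSpace ℝ V]
    {A B C A' P : V} (hA' : Sbtw ℝ B A' C) (hP : Sbtw ℝ A P A') :
    ∃ a b c : ℝ, 0 < a ∧ 0 < b ∧ 0 < c ∧ a + b + c = 1 ∧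
      P = a • A + b • B + c • C ∧ dist P A / dist P A' = (b + c) / a := by
  obtain ⟨⟨t, ⟨ht₀, ht₁⟩, rfl⟩, -⟩ := sbtw_iff_mem_image_Ioo_and_ne.1 hA'
  obtain ⟨⟨s, ⟨hs₀, hs₁⟩, rfl⟩, -⟩ := sbtw_iff_mem_image_Ioo_and_ne.1 hP
  refine ⟨1 - s, s * (1 - t), s * t, by linarith, by nlinarith, by positivity, by ring,
    by simp only [lineMap_apply_module]; module, ?_⟩
  have hAA' : dist A (lineMap B C t) ≠ 0 := dist_ne_zero.2 hP.left_ne_right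
  rw [dist_lineMap_left, dist_lineMap_right, mul_div_mul_right _ _ hAA', Real.norm_eq_abs,
    Real.norm_eq_abs, abs_of_pos hs₀, abs_of_pos (sub_pos.2 hs₁)]
  ring_nf

lemma AffineIndependent.smul_add_smul_add_smul_injective {k V : Type*} [Ring k] [AddCommGroup V]
    [Module k V] {p₀ p₁ p₂ : V} (h : AffineIndependent k ![p₀, p₁, p₂]) {a₀ a₁ a₂ b₀ b₁ b₂ : k}
    (hsum : a₀ + a₁ + a₂ = b₀ + b₁ + b₂)
    (heq : a₀ • p₀ + a₁ • p₁ + a₂ • p₂ = b₀ • p₀ + b₁ • p₁ + b₂ • p₂) :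
    a₀ = b₀ ∧ a₁ = b₁ ∧ a₂ = b₂ := by
  have hzero := affineIndependent_iff.1 h Finset.univ ![a₀ - b₀, a₁ - b₁, a₂ - b₂]
    (by
      rw [Fin.sum_univ_three, ← sub_eq_zero.2 hsum]
      simp only [Matrix.cons_val_zero, Matrix.cons_val_one, Matrix.cons_val]
      abel)
    (by
      rw [Fin.sum_univ_three, ← sub_eq_zero.2 heq]
      simp only [Matrix.cons_val_zero, Matrix.cons_val_one, Matrix.cons_val, sub_smul]
      abel)
  simpa [Fin.forall_fin_succ, sub_eq_zero] using hzero

lemma eight_le_add_div_mul_add_div_mul_add_div {a b c : ℝ} (ha : 0 < a) (hb : 0 < b)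
    (hc : 0 < c) : 8 ≤ (b + c) / a * ((c + a) / b) * ((a + b) / c) := by
  rw [div_mul_div_comm, div_mul_div_comm, le_div_iff₀ (by positivity)]
  nlinarith [mul_nonneg ha.le (sq_nonneg (b - c)), mul_nonneg hb.le (sq_nonneg (c - a)),
    mul_nonneg hc.le (sq_nonneg (a - b))]

theorem cevian_ratio_prod_ge_eight
    (A B C A' B' C' P : EuclideanSpace ℝ (Fin 2))
    (hABC : AffineIndependent ℝ ![A, B, C])
    (hA' : Sbtw ℝ B A' C) (hB' : Sbtw ℝ C B' A) (hC' : Sbtw ℝ A C' B)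
    (hPA : Sbtw ℝ A P A') (hPB : Sbtw ℝ B P B') (hPC : Sbtw ℝ C P C') :
    dist P A / dist P A' * (dist P B / dist P B') * (dist P C / dist P C') ≥ 8 := by
  obtain ⟨a, b, c, ha, hb, hc, hsum, hP, hrA⟩ := exists_barycentric_of_sbtw_of_sbtw hA' hPA
  obtain ⟨b₂, c₂, a₂, -, -, -, hsum₂, hP₂, hrB⟩ := exists_barycentric_of_sbtw_of_sbtw hB' hPB
  obtain ⟨c₃, a₃, b₃, -, -, -, hsum₃, hP₃, hrC⟩ := exists_barycentric_of_sbtw_of_sbtw hC' hPC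
  obtain ⟨rfl, rfl, rfl⟩ := hABC.smul_add_smul_add_smul_injective (by linarith)
    (show a • A + b • B + c • C = a₂ • A + b₂ • B + c₂ • C by rw [← hP, hP₂]; abel)
  obtain ⟨rfl, rfl, rfl⟩ := hABC.smul_add_smul_add_smul_injective (by linarith)
    (show a • A + b • B + c • C = a₃ • A + b₃ • B + c₃ • C by rw [← hP, hP₃]; abel)
  rw [hrA, hrB, hrC]
  exact eight_le_add_div_mul_add_div_mul_add_div ha hb hc
end

section
/- (Van Aubel's theorem) Let A, B, C be affinely independent points of the Euclidean plane, let A' lie strictly between B and C, let B' lie strictly between C and A, let C' lie strictly between A and B, and let P be a point lying strictly between A and A', strictly between B and B', and strictly between C and C'. Then dist(P,A)/dist(P,A') = dist(A,C')/dist(C',B) + dist(A,B')/dist(B',C). -/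
/-!
In barycentric coordinates `(α, β, γ)` of `P` with respect to `A, B, C`, the three cevian ratios
are `AC'/C'B = β/α`, `AB'/B'C = γ/α` and `AP/PA' = (1 - α)/α = (β + γ)/α`, since moving along a
cevian from its vertex rescales the other two coordinates by a common factor.
-/

open AffineMap

section

variable {V P : Type*} [NormedAddCommGroup V] [NormedSpace ℝ V] [MetricSpace P]
  [NormedAddTorsor V P]

theorem dist_left_lineMap_div_dist_lineMap_right {x z : P} (hxz : x ≠ z) {r : ℝ}
    (h0 : 0 ≤ r) (h1 : r ≤ 1) :
    dist x (lineMap x z r) / dist (lineMap x z r) z = r / (1 - r) := by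
  rw [dist_left_lineMap, dist_lineMap_right, Real.norm_of_nonneg h0,
    Real.norm_of_nonneg (sub_nonneg.mpr h1), mul_div_mul_right _ _ (dist_ne_zero.mpr hxz)]

end

namespace AffineBasis

section

variable {ι k V P : Type*} [Field k] [PartialOrder k] [AddCommGroup V] [Module k V]
  [AddTorsor V P] (b : AffineBasis ι k P)

theorem coord_div_coord_of_sbtw {i j l : ι} (hil : i ≠ l) (hjl : j ≠ l) {X Y : P}
    (h : Sbtw k (b l) X Y) :
    b.coord j X / b.coord i X = b.coord j Y / b.coord i Y := by
  obtain ⟨⟨u, -, rfl⟩, hX, -⟩ := h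
  have hu : u ≠ 0 := by
    rintro rfl
    exact hX (lineMap_apply_zero _ _)
  rw [apply_lineMap, apply_lineMap, b.coord_apply_ne hil, b.coord_apply_ne hjl,
    lineMap_apply_ring', lineMap_apply_ring', sub_zero, sub_zero, add_zero, add_zero,
    mul_div_mul_left _ _ hu]

theorem coord_eq_zero_of_wbtw {i j l : ι} (hij : i ≠ j) (hil : i ≠ l) {X : P}
    (h : Wbtw k (b j) X (b l)) : b.coord i X = 0 := by
  obtain ⟨r, -, rfl⟩ := h
  rw [apply_lineMap, b.coord_apply_ne hij, b.coord_apply_ne hil, lineMap_same_apply]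

end

variable {ι V P : Type*} [NormedAddCommGroup V] [NormedSpace ℝ V] [MetricSpace P]
  [NormedAddTorsor V P] (b : AffineBasis ι ℝ P)

theorem dist_div_dist_eq_coord_div_coord {i j : ι} (hij : i ≠ j) {X : P}
    (h : Wbtw ℝ (b i) X (b j)) :
    dist (b i) X / dist X (b j) = b.coord j X / b.coord i X := by
  obtain ⟨r, ⟨h0, h1⟩, rfl⟩ := h
  rw [dist_left_lineMap_div_dist_lineMap_right (b.ind.injective.ne hij) h0 h1, apply_lineMap,
    apply_lineMap, b.coord_apply_eq, b.coord_apply_eq, b.coord_apply_ne hij,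
    b.coord_apply_ne hij.symm, lineMap_apply_ring, lineMap_apply_ring]
  ring

theorem dist_div_dist_eq_one_sub_coord_div_coord {i : ι} {X Y : P} (hY : b.coord i Y = 0)
    (h : Wbtw ℝ (b i) X Y) :
    dist (b i) X / dist X Y = (1 - b.coord i X) / b.coord i X := by
  have hiY : b i ≠ Y := fun hi => by simp [← hi] at hY
  obtain ⟨t, ⟨h0, h1⟩, rfl⟩ := h
  rw [dist_left_lineMap_div_dist_lineMap_right hiY h0 h1, apply_lineMap, hY, b.coord_apply_eq,
    lineMap_apply_ring]
  ring

end AffineBasis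

theorem van_aubel
    (A B C A' B' C' P : EuclideanSpace ℝ (Fin 2))
    (hABC : AffineIndependent ℝ ![A, B, C])
    (hA' : Sbtw ℝ B A' C) (hB' : Sbtw ℝ C B' A) (hC' : Sbtw ℝ A C' B)
    (hPA : Sbtw ℝ A P A') (hPB : Sbtw ℝ B P B') (hPC : Sbtw ℝ C P C') :
    dist P A / dist P A' = dist A C' / dist C' B + dist A B' / dist B' C := by
  let b : AffineBasis (Fin 3) ℝ (EuclideanSpace ℝ (Fin 2)) :=
    ⟨![A, B, C], hABC, hABC.affineSpan_eq_top_iff_card_eq_finrank_add_one.mpr (by simp)⟩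
  have hA : b 0 = A := rfl
  have hB : b 1 = B := rfl
  have hC : b 2 = C := rfl
  rw [← hA, ← hB, ← hC] at *
  have hα : dist (b 0) P / dist P A' = (1 - b.coord 0 P) / b.coord 0 P :=
    b.dist_div_dist_eq_one_sub_coord_div_coord
      (b.coord_eq_zero_of_wbtw (j := 1) (l := 2) (by decide) (by decide) hA'.wbtw) hPA.wbtw
  have hβ : dist (b 0) C' / dist C' (b 1) = b.coord 1 P / b.coord 0 P :=
    (b.dist_div_dist_eq_coord_div_coord (i := 0) (j := 1) (by decide) hC'.wbtw).trans
      (b.coord_div_coord_of_sbtw (l := 2) (by decide) (by decide) hPC).symm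
  have hγ : dist (b 0) B' / dist B' (b 2) = b.coord 2 P / b.coord 0 P :=
    (b.dist_div_dist_eq_coord_div_coord (i := 0) (j := 2) (by decide) hB'.symm.wbtw).trans
      (b.coord_div_coord_of_sbtw (l := 1) (by decide) (by decide) hPB).symm
  have hsum : b.coord 0 P + b.coord 1 P + b.coord 2 P = 1 :=
    (Fin.sum_univ_three _).symm.trans (b.sum_coord_apply_eq_one P)
  rw [dist_comm P, hα, hβ, hγ, ← add_div]
  congr 1
  linarith
end

section
/- Let A, B, C be points of a real inner product space and let k be a real number. Define A₁ = B + k • (C − B), B₁ = C + k • (A − C), C₁ = A + k • (B − A). Then ‖A − A₁‖² + ‖B − B₁‖² + ‖C − C₁‖² = (k² − k + 1) · (‖A − B‖² + ‖B − C‖² + ‖C − A‖²). -/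
/-!
Stewart's relation `‖a - p‖² = (1 - k)‖a - b‖² + k‖a - c‖² - k(1 - k)‖b - c‖²` for the point
`p = b + k • (c - b)` holds for every real `k`, not only for `p` between `b` and `c`. Adding it over
the three cevians, each squared side occurs with coefficient `(1 - k) + k - k(1 - k) = k² - k + 1`.
-/

theorem norm_sub_add_smul_sub_sq {V : Type*} [NormedAddCommGroup V] [InnerProductSpace ℝ V]
    (a b c : V) (k : ℝ) :
    ‖a - (b + k • (c - b))‖ ^ 2
      = (1 - k) * ‖a - b‖ ^ 2 + k * ‖a - c‖ ^ 2 - k * (1 - k) * ‖b - c‖ ^ 2 := by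
  have hp : a - (b + k • (c - b)) = (a - b) - k • (c - b) := by abel
  have hc : a - c = (a - b) - (c - b) := by abel
  rw [hp, hc, norm_sub_rev b c, norm_sub_sq_real (a - b) (k • (c - b)),
    norm_sub_sq_real (a - b) (c - b), real_inner_smul_right, norm_smul, Real.norm_eq_abs, mul_pow,
    sq_abs]
  ring

theorem sum_sq_cevians_same_ratio
    {V : Type*} [NormedAddCommGroup V] [InnerProductSpace ℝ V]
    (A B C : V) (k : ℝ) (A₁ B₁ C₁ : V)
    (hA₁ : A₁ = B + k • (C - B)) (hB₁ : B₁ = C + k • (A - C)) (hC₁ : C₁ = A + k • (B - A)) :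
    ‖A - A₁‖ ^ 2 + ‖B - B₁‖ ^ 2 + ‖C - C₁‖ ^ 2
      = (k ^ 2 - k + 1) * (‖A - B‖ ^ 2 + ‖B - C‖ ^ 2 + ‖C - A‖ ^ 2) := by
  rw [hA₁, hB₁, hC₁, norm_sub_add_smul_sub_sq, norm_sub_add_smul_sub_sq,
    norm_sub_add_smul_sub_sq, norm_sub_rev A C, norm_sub_rev B A, norm_sub_rev C B]
  ring
end

section
/- Let A, B, C be points of a real inner product space, not all equal, and let k be a real number. Define A₁ = B + k • (C − B), B₁ = C + k • (A − C), C₁ = A + k • (B − A). Then ‖A − A₁‖² + ‖B − B₁‖² + ‖C − C₁‖² ≥ (3/4) · (‖A − B‖² + ‖B − C‖² + ‖C − A‖²), with equality if and only if k = 1/2; i.e. the minimum of the left-hand side over k is attained exactly when A₁, B₁, C₁ are the midpoints of the sides. -/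
/-!
Expanding the squares, the three cevians satisfy
`∑ ‖cevian‖² = (k² - k + 1) · ∑ ‖side‖² = (3/4 + (k - 1/2)²) · ∑ ‖side‖²`,
and the sum of the squared sides is positive unless the triangle collapses to a point.
-/

theorem sum_sq_sides_pos {V : Type*} [NormedAddCommGroup V] {A B C : V}
    (hne : ¬ (A = B ∧ B = C)) :
    0 < ‖A - B‖ ^ 2 + ‖B - C‖ ^ 2 + ‖C - A‖ ^ 2 := by
  by_cases hAB : A = B
  · have hBC : 0 < ‖B - C‖ := norm_pos_iff.mpr (sub_ne_zero.mpr fun h => hne ⟨hAB, h⟩)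
    positivity
  · have hAB : 0 < ‖A - B‖ := norm_pos_iff.mpr (sub_ne_zero.mpr hAB)
    positivity

theorem sum_sq_cevians_eq {V : Type*} [NormedAddCommGroup V] [InnerProductSpace ℝ V]
    (A B C : V) (k : ℝ) :
    ‖A - (B + k • (C - B))‖ ^ 2 + ‖B - (C + k • (A - C))‖ ^ 2 + ‖C - (A + k • (B - A))‖ ^ 2
      = (3 / 4 + (k - 1 / 2) ^ 2) * (‖A - B‖ ^ 2 + ‖B - C‖ ^ 2 + ‖C - A‖ ^ 2) := by
  simp only [← real_inner_self_eq_norm_sq, inner_sub_left, inner_sub_right, inner_add_left,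
    inner_add_right, real_inner_smul_left, real_inner_smul_right, real_inner_comm B A,
    real_inner_comm C A, real_inner_comm C B]
  ring

theorem sum_sq_cevians_min_at_midpoints
    {V : Type*} [NormedAddCommGroup V] [InnerProductSpace ℝ V]
    (A B C : V) (hne : ¬ (A = B ∧ B = C)) (k : ℝ) (A₁ B₁ C₁ : V)
    (hA₁ : A₁ = B + k • (C - B)) (hB₁ : B₁ = C + k • (A - C)) (hC₁ : C₁ = A + k • (B - A)) :
    ‖A - A₁‖ ^ 2 + ‖B - B₁‖ ^ 2 + ‖C - C₁‖ ^ 2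
        ≥ (3 / 4) * (‖A - B‖ ^ 2 + ‖B - C‖ ^ 2 + ‖C - A‖ ^ 2)
      ∧ (‖A - A₁‖ ^ 2 + ‖B - B₁‖ ^ 2 + ‖C - C₁‖ ^ 2
          = (3 / 4) * (‖A - B‖ ^ 2 + ‖B - C‖ ^ 2 + ‖C - A‖ ^ 2) ↔ k = 1 / 2) := by
  subst hA₁ hB₁ hC₁
  have hS := sum_sq_sides_pos hne
  rw [sum_sq_cevians_eq, add_mul]
  refine ⟨le_add_of_nonneg_right (by positivity), ?_⟩
  rw [add_eq_left, mul_eq_zero, or_iff_left hS.ne', sq_eq_zero_iff, sub_eq_zero]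
end

section
/- Let A, B, C be affinely independent points of the Euclidean plane with side lengths a = dist(B,C), b = dist(C,A), c = dist(A,B). Let A₁ lie strictly between B and C, B₁ strictly between C and A, C₁ strictly between A and B, and set α = a · (dist(A₁,B) − dist(A₁,C)), β = b · (dist(B₁,C) − dist(B₁,A)), γ = c · (dist(C₁,A) − dist(C₁,B)). Then the Ceva condition (dist(A₁,B)/dist(A₁,C)) · (dist(B₁,C)/dist(B₁,A)) · (dist(C₁,A)/dist(C₁,B)) = 1 holds if and only if (a² + α)(b² + β)(c² + γ) = (a² − α)(b² − β)(c² − γ). -/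
/-! Since `A₁` lies on the segment `BC`, `a = dist A₁ B + dist A₁ C`, so `a² + α = 2a · dist A₁ B`
and `a² - α = 2a · dist A₁ C`, and likewise for the other two sides. The claimed identity is
therefore the Ceva condition with both sides multiplied by the nonzero factor `8abc`. -/

section Between

variable {V P : Type*} [SeminormedAddCommGroup V] [NormedSpace ℝ V] [PseudoMetricSpace P]
  [NormedAddTorsor V P]

theorem Wbtw.sq_dist_add_mul_dist_sub_dist {x y z : P} (h : Wbtw ℝ x y z) :
    dist x z ^ 2 + dist x z * (dist y x - dist y z) = 2 * dist x z * dist y x := by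
  rw [← h.dist_add_dist, dist_comm x y]
  ring

theorem Wbtw.sq_dist_sub_mul_dist_sub_dist {x y z : P} (h : Wbtw ℝ x y z) :
    dist x z ^ 2 - dist x z * (dist y x - dist y z) = 2 * dist x z * dist y z := by
  rw [← h.dist_add_dist, dist_comm x y]
  ring

end Between

theorem div_mul_div_mul_div_eq_one_iff {K : Type*} [Field K] {u v w x p q s t r : K}
    (hv : v ≠ 0) (hx : x ≠ 0) (hq : q ≠ 0) (hs : s ≠ 0) (ht : t ≠ 0) (hr : r ≠ 0) :
    u / v * (w / x) * (p / q) = 1 ↔ s * u * (t * w) * (r * p) = s * v * (t * x) * (r * q) := by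
  rw [div_mul_div_comm, div_mul_div_comm, div_eq_one_iff_eq (by simp [*])]
  have hstr : s * t * r ≠ 0 := by simp [*]
  rw [← mul_right_inj' hstr]
  constructor <;> intro h <;> linear_combination h

theorem ceva_condition_iff_general
    (A B C A₁ B₁ C₁ : EuclideanSpace ℝ (Fin 2))
    (hA₁ : Sbtw ℝ B A₁ C) (hB₁ : Sbtw ℝ C B₁ A) (hC₁ : Sbtw ℝ A C₁ B)
    (a b c α β γ : ℝ)
    (ha : a = dist B C) (hb : b = dist C A) (hc : c = dist A B)
    (hα : α = a * (dist A₁ B - dist A₁ C))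
    (hβ : β = b * (dist B₁ C - dist B₁ A))
    (hγ : γ = c * (dist C₁ A - dist C₁ B)) :
    (dist A₁ B / dist A₁ C) * (dist B₁ C / dist B₁ A) * (dist C₁ A / dist C₁ B) = 1
      ↔ (a ^ 2 + α) * (b ^ 2 + β) * (c ^ 2 + γ)
          = (a ^ 2 - α) * (b ^ 2 - β) * (c ^ 2 - γ) := by
  subst ha hb hc hα hβ hγ
  rw [hA₁.wbtw.sq_dist_add_mul_dist_sub_dist, hB₁.wbtw.sq_dist_add_mul_dist_sub_dist,
    hC₁.wbtw.sq_dist_add_mul_dist_sub_dist, hA₁.wbtw.sq_dist_sub_mul_dist_sub_dist,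
    hB₁.wbtw.sq_dist_sub_mul_dist_sub_dist, hC₁.wbtw.sq_dist_sub_mul_dist_sub_dist]
  exact div_mul_div_mul_div_eq_one_iff (dist_ne_zero.2 hA₁.ne_right)
    (dist_ne_zero.2 hB₁.ne_right) (dist_ne_zero.2 hC₁.ne_right)
    (mul_ne_zero two_ne_zero (dist_ne_zero.2 hA₁.left_ne_right))
    (mul_ne_zero two_ne_zero (dist_ne_zero.2 hB₁.left_ne_right))
    (mul_ne_zero two_ne_zero (dist_ne_zero.2 hC₁.left_ne_right))

theorem ceva_condition_iff
    (A B C A₁ B₁ C₁ : EuclideanSpace ℝ (Fin 2))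
    (hABC : AffineIndependent ℝ ![A, B, C])
    (hA₁ : Sbtw ℝ B A₁ C) (hB₁ : Sbtw ℝ C B₁ A) (hC₁ : Sbtw ℝ A C₁ B)
    (a b c α β γ : ℝ)
    (ha : a = dist B C) (hb : b = dist C A) (hc : c = dist A B)
    (hα : α = a * (dist A₁ B - dist A₁ C))
    (hβ : β = b * (dist B₁ C - dist B₁ A))
    (hγ : γ = c * (dist C₁ A - dist C₁ B)) :
    (dist A₁ B / dist A₁ C) * (dist B₁ C / dist B₁ A) * (dist C₁ A / dist C₁ B) = 1
      ↔ (a ^ 2 + α) * (b ^ 2 + β) * (c ^ 2 + γ)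
          = (a ^ 2 - α) * (b ^ 2 - β) * (c ^ 2 - γ) :=
  ceva_condition_iff_general A B C A₁ B₁ C₁ hA₁ hB₁ hC₁ a b c α β γ ha hb hc hα hβ hγ
end

section
/- Let A, B, C be affinely independent points of the Euclidean plane, let A₁ lie strictly between B and C, let B₁ lie strictly between C and A, let C₁ lie strictly between A and B, and let P be a point lying strictly between A and A₁, strictly between B and B₁, and strictly between C and C₁. Then (dist(P,A)/dist(P,A₁)) · (dist(P,B)/dist(P,B₁)) · (dist(P,C)/dist(P,C₁)) = (dist(A,B) · dist(B,C) · dist(C,A)) / (dist(A₁,B) · dist(B₁,C) · dist(C₁,A)). -/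
/-!
If `A₁ = lineMap B C t` and `P = lineMap A A₁ s`, then `P` has barycentric coordinates
`(1 - s, s (1 - t), s t)` with respect to `ABC`, while `PA / PA₁ = s / (1 - s)` and
`A₁B = t · BC`. Reading the coordinates of `P` off two different cevians and using their
uniqueness gives `s₁ t₁ = 1 - s₃`, `s₂ t₂ = 1 - s₁`, `s₃ t₃ = 1 - s₂`; multiplying these is exactly
the claimed identity `∏ s / (1 - s) = ∏ 1 / t`.
-/

open AffineMap

section Module

variable {k V : Type*} [CommRing k] [AddCommGroup V] [Module k V]

theorem lineMap_lineMap_eq_smul_add_smul_add_smul (A B C : V) (s t : k) :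
    lineMap A (lineMap B C t) s = (1 - s) • A + (s * (1 - t)) • B + (s * t) • C := by
  simp only [lineMap_apply_module]
  module

theorem AffineIndependent.eq_of_smul_add_smul_add_smul_eq {A B C P : V}
    (h : AffineIndependent k ![A, B, C]) {a b c a' b' c' : k}
    (hP : P = a • A + b • B + c • C) (hP' : P = a' • A + b' • B + c' • C)
    (hw : a + b + c = a' + b' + c') : a = a' ∧ b = b' ∧ c = c' := by
  have hsum : ∑ i, ![a - a', b - b', c - c'] i = 0 := by
    simp only [Fin.sum_univ_three, Matrix.cons_val]
    linear_combination hw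
  have hvsub : Finset.univ.weightedVSub ![A, B, C] ![a - a', b - b', c - c'] = (0 : V) := by
    rw [Finset.weightedVSub_eq_weightedVSubOfPoint_of_sum_eq_zero _ _ _ hsum 0]
    simp only [Finset.weightedVSubOfPoint_apply, vsub_eq_sub, sub_zero, Fin.sum_univ_three,
      Matrix.cons_val]
    linear_combination (norm := module) hP.symm.trans hP'
  have hzero := (affineIndependent_iff_of_fintype k _).1 h _ hsum hvsub
  exact ⟨sub_eq_zero.1 (hzero 0), sub_eq_zero.1 (hzero 1), sub_eq_zero.1 (hzero 2)⟩

end Module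

section Normed

variable {V : Type*} [NormedAddCommGroup V] [NormedSpace ℝ V]

theorem Sbtw.exists_cevian_coords {A B C A₁ P : V} (hA₁ : Sbtw ℝ B A₁ C) (hP : Sbtw ℝ A P A₁) :
    ∃ s t : ℝ, s < 1 ∧ 0 < t ∧
      P = (1 - s) • A + (s * (1 - t)) • B + (s * t) • C ∧
      dist P A / dist P A₁ = s / (1 - s) ∧ dist A₁ B = t * dist B C := by
  obtain ⟨t, ⟨ht₀, -⟩, rfl⟩ := hA₁.mem_image_Ioo
  have hAA₁ : A ≠ lineMap B C t := hP.left_ne_right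
  obtain ⟨s, ⟨hs₀, hs₁⟩, rfl⟩ := hP.mem_image_Ioo
  refine ⟨s, t, hs₁, ht₀, lineMap_lineMap_eq_smul_add_smul_add_smul A B C s t, ?_, ?_⟩
  · rw [dist_lineMap_left, dist_lineMap_right, Real.norm_of_nonneg hs₀.le,
      Real.norm_of_nonneg (sub_nonneg.2 hs₁.le), mul_div_mul_right _ _ (dist_ne_zero.2 hAA₁)]
  · rw [dist_lineMap_left, Real.norm_of_nonneg ht₀.le]

end Normed

theorem cevian_ratio_product_eq
    (A B C A₁ B₁ C₁ P : EuclideanSpace ℝ (Fin 2))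
    (hABC : AffineIndependent ℝ ![A, B, C])
    (hA₁ : Sbtw ℝ B A₁ C) (hB₁ : Sbtw ℝ C B₁ A) (hC₁ : Sbtw ℝ A C₁ B)
    (hPA : Sbtw ℝ A P A₁) (hPB : Sbtw ℝ B P B₁) (hPC : Sbtw ℝ C P C₁) :
    (dist P A / dist P A₁) * (dist P B / dist P B₁) * (dist P C / dist P C₁)
      = (dist A B * dist B C * dist C A) / (dist A₁ B * dist B₁ C * dist C₁ A) := by
  obtain ⟨s₁, t₁, hs₁, ht₁, hPa, hra, hda⟩ := hA₁.exists_cevian_coords hPA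
  obtain ⟨s₂, t₂, hs₂, ht₂, hPb, hrb, hdb⟩ := hB₁.exists_cevian_coords hPB
  obtain ⟨s₃, t₃, hs₃, ht₃, hPc, hrc, hdc⟩ := hC₁.exists_cevian_coords hPC
  have hPb' : P = (s₂ * t₂) • A + (1 - s₂) • B + (s₂ * (1 - t₂)) • C := by rw [hPb]; module
  have hPc' : P = (s₃ * (1 - t₃)) • A + (s₃ * t₃) • B + (1 - s₃) • C := by rw [hPc]; module
  have hα : 1 - s₁ = s₂ * t₂ := (hABC.eq_of_smul_add_smul_add_smul_eq hPa hPb' (by ring)).1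
  have hβ : 1 - s₂ = s₃ * t₃ := (hABC.eq_of_smul_add_smul_add_smul_eq hPb' hPc' (by ring)).2.1
  have hγ : 1 - s₃ = s₁ * t₁ := (hABC.eq_of_smul_add_smul_add_smul_eq hPc' hPa (by ring)).2.2
  have hBC : dist B C ≠ 0 := dist_ne_zero.2 hA₁.left_ne_right
  have hCA : dist C A ≠ 0 := dist_ne_zero.2 hB₁.left_ne_right
  have hAB : dist A B ≠ 0 := dist_ne_zero.2 hC₁.left_ne_right
  have h1s₁ : 1 - s₁ ≠ 0 := sub_ne_zero.2 hs₁.ne'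
  have h1s₂ : 1 - s₂ ≠ 0 := sub_ne_zero.2 hs₂.ne'
  have h1s₃ : 1 - s₃ ≠ 0 := sub_ne_zero.2 hs₃.ne'
  rw [hra, hrb, hrc, hda, hdb, hdc]
  field_simp
  rw [hα, hβ, hγ]
  ring
end

section
/- Let A, B, C be affinely independent points of the Euclidean plane forming an acute triangle (each of the angles ∠BAC, ∠ABC, ∠BCA is strictly less than π/2), and let A', B', C' be the feet of the altitudes from A, B, C, i.e. the orthogonal projections of A onto line BC, of B onto line CA, and of C onto line AB. Then dist(A', B') · dist(A', C') = dist(A', B) · dist(A', C). -/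
/-!
At each vertex the orthic triangle cuts off a triangle similar to the original one: at `C`,
the feet `A'` and `B'` satisfy `A'B' / AB = CA' / CA` (both ratios are `|cos C|`), and likewise
`A'C' / AC = BA' / BA` at `B`. Multiplying the two proportions, `AB` and `AC` cancel.
-/

open EuclideanGeometry RealInnerProductSpace

variable {V P : Type*} [NormedAddCommGroup V] [InnerProductSpace ℝ V] [MetricSpace P]
  [NormedAddTorsor V P]

theorem orthogonalProjection_line_vsub_left (X Y Z : P) :
    (orthogonalProjection line[ℝ, X, Y] Z : P) -ᵥ X =
      (⟪Z -ᵥ X, Y -ᵥ X⟫ / ‖Y -ᵥ X‖ ^ 2) • (Y -ᵥ X) := by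
  rw [orthogonalProjection_apply_mem _ (left_mem_affineSpan_pair ℝ X Y), vadd_vsub,
    Submodule.coe_orthogonalProjectionOnto_apply]
  have h : (line[ℝ, X, Y]).direction = ℝ ∙ (Y -ᵥ X) := by
    rw [direction_affineSpan, vectorSpan_pair_rev]
  simp only [h, Submodule.starProjection_singleton, real_inner_comm]
  rfl

theorem norm_smul_sub_smul_mul_norm (u v : V) :
    ‖(⟪u, v⟫ / ‖v‖ ^ 2) • v - (⟪v, u⟫ / ‖u‖ ^ 2) • u‖ * ‖u‖ =
      ‖(⟪u, v⟫ / ‖v‖ ^ 2) • v‖ * ‖u - v‖ := by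
  rcases eq_or_ne u 0 with rfl | hu
  · simp
  rcases eq_or_ne v 0 with rfl | hv
  · simp
  have hu' : ‖u‖ ≠ 0 := norm_ne_zero_iff.2 hu
  have hv' : ‖v‖ ≠ 0 := norm_ne_zero_iff.2 hv
  rw [← sq_eq_sq₀ (by positivity) (by positivity), mul_pow, mul_pow, norm_sub_sq_real,
    norm_sub_sq_real, norm_smul, norm_smul, inner_smul_left, inner_smul_right, real_inner_comm v u]
  simp only [Real.norm_eq_abs, mul_pow, sq_abs, div_pow, conj_trivial]
  field_simp

theorem dist_orthogonalProjection_line_mul_dist (X Y Z : P) :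
    dist (orthogonalProjection line[ℝ, X, Y] Z : P) (orthogonalProjection line[ℝ, X, Z] Y) *
        dist X Z =
      dist (orthogonalProjection line[ℝ, X, Y] Z : P) X * dist Z Y := by
  rw [dist_comm X Z]
  simp only [dist_eq_norm_vsub V]
  rw [← vsub_sub_vsub_cancel_right _ (orthogonalProjection line[ℝ, X, Z] Y : P) X,
    ← vsub_sub_vsub_cancel_right Z Y X, orthogonalProjection_line_vsub_left,
    orthogonalProjection_line_vsub_left]
  exact norm_smul_sub_smul_mul_norm _ _

theorem orthic_foot_dist_prod_general
    (A B C A' B' C' : EuclideanSpace ℝ (Fin 2))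
    (hABC : AffineIndependent ℝ ![A, B, C])
    (hA' : A' = orthogonalProjection (affineSpan ℝ {B, C}) A)
    (hB' : B' = orthogonalProjection (affineSpan ℝ {C, A}) B)
    (hC' : C' = orthogonalProjection (affineSpan ℝ {A, B}) C) :
    dist A' B' * dist A' C' = dist A' B * dist A' C := by
  have hAB : dist A B ≠ 0 := dist_ne_zero.2 (hABC.injective.ne (by decide : (0 : Fin 3) ≠ 1))
  have hAC : dist A C ≠ 0 := dist_ne_zero.2 (hABC.injective.ne (by decide : (0 : Fin 3) ≠ 2))
  have atC : dist A' B' * dist A C = dist A' C * dist A B := by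
    simpa only [Set.pair_comm C B, dist_comm C A, ← hA', ← hB'] using
      dist_orthogonalProjection_line_mul_dist C B A
  have atB : dist A' C' * dist A B = dist A' B * dist A C := by
    simpa only [Set.pair_comm B A, dist_comm B A, ← hA', ← hC'] using
      dist_orthogonalProjection_line_mul_dist B C A
  apply mul_right_cancel₀ (mul_ne_zero hAC hAB)
  linear_combination (dist A' C' * dist A B) * atC + (dist A' C * dist A B) * atB

theorem orthic_foot_dist_prod
    (A B C A' B' C' : EuclideanSpace ℝ (Fin 2))
    (hABC : AffineIndependent ℝ ![A, B, C])
    (hacuteA : angle B A C < Real.pi / 2)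
    (hacuteB : angle A B C < Real.pi / 2)
    (hacuteC : angle B C A < Real.pi / 2)
    (hA' : A' = orthogonalProjection (affineSpan ℝ {B, C}) A)
    (hB' : B' = orthogonalProjection (affineSpan ℝ {C, A}) B)
    (hC' : C' = orthogonalProjection (affineSpan ℝ {A, B}) C) :
    dist A' B' * dist A' C' = dist A' B * dist A' C :=
  orthic_foot_dist_prod_general A B C A' B' C' hABC hA' hB' hC'
end

section
/- (Smarandache's Orthic Theorem) Let A, B, C be affinely independent points of the Euclidean plane forming an acute triangle (each of the angles ∠BAC, ∠ABC, ∠BCA is strictly less than π/2), let A', B', C' be the feet of the altitudes from A, B, C respectively, and write a = dist(B,C), b = dist(C,A), c = dist(A,B), a' = dist(B',C'), b' = dist(C',A'), c' = dist(A',B'). Then 4 · (a'·b' + b'·c' + c'·a') ≤ a² + b² + c². -/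
/-!
The side B'C' of the orthic triangle is the segment joining the projections of B and C onto the
lines AC and AB, so B'C' = a·|cos A| = a·|⟪B - A, C - A⟫| / (b c). Hence
B'C'·C'A' = ⟪B - A, C - A⟫ ⟪C - B, A - B⟫ / c², and the two inner products are positive (acute
angles) and sum to c², so AM–GM gives 4·B'C'·C'A' ≤ c². Summing the three cyclic versions gives
the theorem.
-/
open EuclideanGeometry RealInnerProductSpace

theorem InnerProductGeometry.inner_pos_of_angle_lt_pi_div_two {V : Type*}
    [NormedAddCommGroup V] [InnerProductSpace ℝ V] {x y : V}
    (h : InnerProductGeometry.angle x y < Real.pi / 2) : 0 < ⟪x, y⟫ := by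
  rw [InnerProductGeometry.angle, Real.arccos_lt_pi_div_two, div_pos_iff] at h
  rcases h with h | h
  · exact h.1
  · exact absurd h.2 (not_lt.2 (by positivity))

theorem norm_inner_div_smul_sub_inner_div_smul {V : Type*} [NormedAddCommGroup V]
    [InnerProductSpace ℝ V] (u v : V) :
    ‖(⟪u, v⟫ / ‖v‖ ^ 2) • v - (⟪u, v⟫ / ‖u‖ ^ 2) • u‖ = |⟪u, v⟫| * ‖u - v‖ / (‖u‖ * ‖v‖) := by
  rcases eq_or_ne u 0 with rfl | hu
  · simp
  rcases eq_or_ne v 0 with rfl | hv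
  · simp
  have hu' : ‖u‖ ≠ 0 := norm_ne_zero_iff.2 hu
  have hv' : ‖v‖ ≠ 0 := norm_ne_zero_iff.2 hv
  rw [← sq_eq_sq₀ (norm_nonneg _) (by positivity), norm_sub_sq_real, div_pow, mul_pow, sq_abs,
    norm_sub_sq_real u v, norm_smul, norm_smul, real_inner_smul_left, real_inner_smul_right,
    real_inner_comm v u]
  simp only [Real.norm_eq_abs, abs_div, abs_pow, abs_norm]
  field_simp
  rw [sq_abs]
  ring

variable {V P : Type*} [NormedAddCommGroup V] [InnerProductSpace ℝ V] [MetricSpace P]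
  [NormedAddTorsor V P]

namespace EuclideanGeometry

theorem coe_orthogonalProjection_line (P₁ P₂ X : P) :
    (orthogonalProjection line[ℝ, P₁, P₂] X : P) =
      (⟪X -ᵥ P₁, P₂ -ᵥ P₁⟫ / ‖P₂ -ᵥ P₁‖ ^ 2) • (P₂ -ᵥ P₁) +ᵥ P₁ := by
  have hdir : (line[ℝ, P₁, P₂]).direction = ℝ ∙ (P₂ -ᵥ P₁) := by
    rw [direction_affineSpan, vectorSpan_pair_rev]
  rw [orthogonalProjection_apply_mem _ (left_mem_affineSpan_pair ℝ P₁ P₂),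
    Submodule.coe_orthogonalProjectionOnto_apply]
  simp only [hdir, Submodule.starProjection_singleton, real_inner_comm (P₂ -ᵥ P₁)]
  rfl

theorem dist_orthogonalProjection_line_orthogonalProjection_line (A B C : P) :
    dist (orthogonalProjection line[ℝ, C, A] B : P) (orthogonalProjection line[ℝ, A, B] C) =
      |⟪B -ᵥ A, C -ᵥ A⟫| * dist B C / (dist A B * dist C A) := by
  rw [eq_orthogonalProjection_of_eq_subspace (by rw [Set.pair_comm]) B,
    coe_orthogonalProjection_line, coe_orthogonalProjection_line,
    dist_eq_norm_vsub V, vadd_vsub_vadd_cancel_right, real_inner_comm (B -ᵥ A) (C -ᵥ A),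
    norm_inner_div_smul_sub_inner_div_smul, vsub_sub_vsub_cancel_right, dist_eq_norm_vsub V,
    dist_comm A B, dist_eq_norm_vsub V, dist_eq_norm_vsub V]

theorem inner_vsub_vsub_add_inner_vsub_vsub (A B C : P) :
    ⟪B -ᵥ A, C -ᵥ A⟫ + ⟪C -ᵥ B, A -ᵥ B⟫ = dist A B ^ 2 := by
  rw [← neg_vsub_eq_vsub_rev B A, inner_neg_right, real_inner_comm (B -ᵥ A) (C -ᵥ B),
    ← sub_eq_add_neg, ← inner_sub_right, vsub_sub_vsub_cancel_left, real_inner_self_eq_norm_sq,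
    dist_comm, dist_eq_norm_vsub V]

theorem four_mul_dist_orthogonalProjection_mul_dist_le_dist_sq (A B C : P)
    (hA : ∠ B A C < Real.pi / 2) (hB : ∠ C B A < Real.pi / 2) :
    4 * (dist (orthogonalProjection line[ℝ, C, A] B : P) (orthogonalProjection line[ℝ, A, B] C) *
      dist (orthogonalProjection line[ℝ, A, B] C : P) (orthogonalProjection line[ℝ, B, C] A)) ≤
      dist A B ^ 2 := by
  have hpA : 0 < ⟪B -ᵥ A, C -ᵥ A⟫ := InnerProductGeometry.inner_pos_of_angle_lt_pi_div_two hA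
  have hpB : 0 < ⟪C -ᵥ B, A -ᵥ B⟫ := InnerProductGeometry.inner_pos_of_angle_lt_pi_div_two hB
  have hAB : 0 < dist A B := dist_pos.2 fun h => by simp [h] at hpA
  have hBC : 0 < dist B C := dist_pos.2 fun h => by simp [h] at hpB
  have hCA : 0 < dist C A := dist_pos.2 fun h => by simp [h] at hpA
  have hsum := inner_vsub_vsub_add_inner_vsub_vsub A B C
  rw [dist_orthogonalProjection_line_orthogonalProjection_line,
    dist_orthogonalProjection_line_orthogonalProjection_line B C A, abs_of_pos hpA,
    abs_of_pos hpB]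
  calc _ = 4 * (⟪B -ᵥ A, C -ᵥ A⟫ * ⟪C -ᵥ B, A -ᵥ B⟫) / dist A B ^ 2 := by field_simp
    _ ≤ dist A B ^ 2 := by
      rw [div_le_iff₀ (by positivity), ← sq, ← hsum]
      nlinarith [sq_nonneg (⟪B -ᵥ A, C -ᵥ A⟫ - ⟪C -ᵥ B, A -ᵥ B⟫)]

end EuclideanGeometry

theorem smarandache_orthic_theorem_general
    (A B C A' B' C' : EuclideanSpace ℝ (Fin 2))
    (hacuteA : angle B A C < Real.pi / 2)
    (hacuteB : angle A B C < Real.pi / 2)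
    (hacuteC : angle B C A < Real.pi / 2)
    (hA' : A' = orthogonalProjection (affineSpan ℝ {B, C}) A)
    (hB' : B' = orthogonalProjection (affineSpan ℝ {C, A}) B)
    (hC' : C' = orthogonalProjection (affineSpan ℝ {A, B}) C)
    (a b c a' b' c' : ℝ)
    (ha : a = dist B C) (hb : b = dist C A) (hc : c = dist A B)
    (ha' : a' = dist B' C') (hb' : b' = dist C' A') (hc' : c' = dist A' B') :
    4 * (a' * b' + b' * c' + c' * a') ≤ a ^ 2 + b ^ 2 + c ^ 2 := by
  rw [angle_comm] at hacuteB hacuteC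
  subst hA' hB' hC' ha hb hc ha' hb' hc'
  have hAB := four_mul_dist_orthogonalProjection_mul_dist_le_dist_sq A B C hacuteA hacuteB
  have hBC := four_mul_dist_orthogonalProjection_mul_dist_le_dist_sq B C A hacuteB hacuteC
  have hCA := four_mul_dist_orthogonalProjection_mul_dist_le_dist_sq C A B hacuteC hacuteA
  linarith

theorem smarandache_orthic_theorem
    (A B C A' B' C' : EuclideanSpace ℝ (Fin 2))
    (hABC : AffineIndependent ℝ ![A, B, C])
    (hacuteA : angle B A C < Real.pi / 2)
    (hacuteB : angle A B C < Real.pi / 2)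
    (hacuteC : angle B C A < Real.pi / 2)
    (hA' : A' = orthogonalProjection (affineSpan ℝ {B, C}) A)
    (hB' : B' = orthogonalProjection (affineSpan ℝ {C, A}) B)
    (hC' : C' = orthogonalProjection (affineSpan ℝ {A, B}) C)
    (a b c a' b' c' : ℝ)
    (ha : a = dist B C) (hb : b = dist C A) (hc : c = dist A B)
    (ha' : a' = dist B' C') (hb' : b' = dist C' A') (hc' : c' = dist A' B') :
    4 * (a' * b' + b' * c' + c' * a') ≤ a ^ 2 + b ^ 2 + c ^ 2 :=
  smarandache_orthic_theorem_general A B C A' B' C' hacuteA hacuteB hacuteC hA' hB' hC' a b c a' b'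
    c' ha hb hc ha' hb' hc'
end

section
/- Let n ≥ 2, let O be a point of the Euclidean plane, let R > 0, and let A : Fin n → EuclideanSpace ℝ (Fin 2) be pairwise distinct points with dist(O, A i) = R for all i. Then there exist indices i ≠ j such that the angle ∠(A i) O (A j) is at most 2π/n. -/
/-!
Measure the directions of the points from `O` as oriented angles from a fixed one, take their
representatives in `(-π, π]` and sort them. The `n` gaps between cyclically consecutive
directions, the last one taken across the cut at `±π`, add up to `2π`, so one of them is at most
`2π / n`; the unoriented angle between the two points bounding it is that gap.
-/

open Real Finset

section CyclicGap

variable (T : ℝ) {m : ℕ} (x : Fin (m + 1) → ℝ)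

/-- The gaps between cyclically consecutive values of `x`, viewed on a circle of circumference
`T`: `k + 1` wraps around in `Fin`, and the last gap is corrected by `T`. -/
def cyclicGap (k : Fin (m + 1)) : ℝ :=
  x (k + 1) - x k + if k = Fin.last m then T else 0

theorem sum_cyclicGap : ∑ k, cyclicGap T x k = T := by
  have hshift : ∑ k, x (k + 1) = ∑ k, x k := Equiv.sum_comp (Equiv.addRight (1 : Fin (m + 1))) x
  simp only [cyclicGap, sum_add_distrib, sum_sub_distrib, hshift, sub_self, zero_add,
    sum_ite_eq', mem_univ, if_true]

variable {x}

theorem cyclicGap_nonneg (hx : Monotone x) (hT : x (Fin.last m) - x 0 ≤ T) (k : Fin (m + 1)) :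
    0 ≤ cyclicGap T x k := by
  by_cases hk : k = Fin.last m
  · subst hk
    simp only [cyclicGap, Fin.last_add_one, if_true]
    linarith
  · have : x k ≤ x (k + 1) :=
      hx (Fin.le_of_lt (Fin.lt_add_one_iff.2 (Fin.lt_last_iff_ne_last.2 hk)))
    simp only [cyclicGap, hk, if_false]
    linarith

variable (x)

theorem exists_cyclicGap_le : ∃ k, cyclicGap T x k ≤ T / ↑(m + 1) := by
  obtain ⟨k, -, hk⟩ := exists_le_of_sum_le (univ_nonempty (α := Fin (m + 1)))
    (f := cyclicGap T x) (g := fun _ => T / ↑(m + 1)) (by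
      rw [sum_cyclicGap, sum_const, card_univ, Fintype.card_fin, nsmul_eq_mul,
        mul_div_cancel₀ _ (by positivity)])
  exact ⟨k, hk⟩

end CyclicGap

theorem Real.Angle.exists_abs_toReal_sub_le {n : ℕ} (hn : 2 ≤ n) (θ : Fin n → Angle) :
    ∃ i j, i ≠ j ∧ |(θ j - θ i).toReal| ≤ 2 * π / n := by
  obtain ⟨m, rfl⟩ : ∃ m, n = m + 2 := ⟨n - 2, by omega⟩
  set x : Fin (m + 2) → ℝ := fun i => (θ i).toReal
  set σ := Tuple.sort x
  have hmono : Monotone (x ∘ σ) := Tuple.monotone_sort x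
  have hspread : (x ∘ σ) (Fin.last (m + 1)) - (x ∘ σ) 0 ≤ 2 * π := by
    simp only [Function.comp, x]
    linarith [Angle.toReal_le_pi (θ (σ (Fin.last (m + 1)))), Angle.neg_pi_lt_toReal (θ (σ 0))]
  obtain ⟨k, hk⟩ := exists_cyclicGap_le (2 * π) (x ∘ σ)
  have hk0 := cyclicGap_nonneg (2 * π) hmono hspread k
  -- the wrap-around term `2π` of the last gap vanishes in `Angle`
  have hcoe : θ (σ (k + 1)) - θ (σ k) = (cyclicGap (2 * π) (x ∘ σ) k : Angle) := by
    simp only [cyclicGap, Function.comp, x, Angle.coe_add, Angle.coe_sub, Angle.coe_toReal]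
    split_ifs <;> simp
  refine ⟨σ k, σ (k + 1), fun h => ?_, ?_⟩
  · have : (1 : Fin (m + 2)) = 0 := by simpa using σ.injective h
    exact absurd (congrArg Fin.val this) (by simp)
  · have hπ : 2 * π / ↑(m + 2) ≤ π := by
      rw [div_le_iff₀ (by positivity)]
      push_cast
      nlinarith [pi_pos]
    rwa [hcoe, Angle.abs_toReal_coe_eq_self_iff.2 ⟨hk0, hk.trans hπ⟩]

theorem InnerProductGeometry.exists_angle_le_two_pi_div {V : Type*} [NormedAddCommGroup V]
    [InnerProductSpace ℝ V] [Fact (Module.finrank ℝ V = 2)] {n : ℕ} (hn : 2 ≤ n)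
    (v : Fin n → V) (hv : ∀ i, v i ≠ 0) :
    ∃ i j, i ≠ j ∧ angle (v i) (v j) ≤ 2 * π / n := by
  have : FiniteDimensional ℝ V := .of_fact_finrank_eq_two
  let o : Orientation ℝ V (Fin 2) := (Module.finBasisOfFinrankEq ℝ V Fact.out).orientation
  let i₀ : Fin n := ⟨0, by omega⟩
  obtain ⟨i, j, hij, hle⟩ := Angle.exists_abs_toReal_sub_le hn fun i => o.oangle (v i₀) (v i)
  refine ⟨i, j, hij, ?_⟩
  rwa [o.angle_eq_abs_oangle_toReal (hv i) (hv j), ← o.oangle_sub_left (hv i₀) (hv i) (hv j)]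

theorem exists_small_central_angle_general
    (n : ℕ) (hn : 2 ≤ n)
    (O : EuclideanSpace ℝ (Fin 2)) (R : ℝ) (hR : 0 < R)
    (A : Fin n → EuclideanSpace ℝ (Fin 2))
    (hdist : ∀ i : Fin n, dist O (A i) = R) :
    ∃ i j : Fin n, i ≠ j ∧
      EuclideanGeometry.angle (A i) O (A j) ≤ 2 * Real.pi / n := by
  have : Fact (Module.finrank ℝ (EuclideanSpace ℝ (Fin 2)) = 2) := ⟨finrank_euclideanSpace_fin⟩
  refine InnerProductGeometry.exists_angle_le_two_pi_div hn (fun i => A i -ᵥ O) fun i => ?_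
  rw [vsub_ne_zero, ← dist_pos, dist_comm, hdist]
  exact hR

theorem exists_small_central_angle
    (n : ℕ) (hn : 2 ≤ n)
    (O : EuclideanSpace ℝ (Fin 2)) (R : ℝ) (hR : 0 < R)
    (A : Fin n → EuclideanSpace ℝ (Fin 2))
    (hinj : Function.Injective A)
    (hdist : ∀ i : Fin n, dist O (A i) = R) :
    ∃ i j : Fin n, i ≠ j ∧
      EuclideanGeometry.angle (A i) O (A j) ≤ 2 * Real.pi / n :=
  exists_small_central_angle_general n hn O R hR A hdist
end

section
/- Let n ≥ 2, let O be a point of the Euclidean plane, let R > 0, and let A : Fin n → EuclideanSpace ℝ (Fin 2) be pairwise distinct points with dist(O, A i) = R for all i. Then there exist indices i ≠ j such that ‖(A i −ᵥ O) + (A j −ᵥ O)‖ ≥ 2 · R · Real.cos (π / n). -/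
/-!
Identify the plane with `ℂ` and write `A i - O = R e^{iθᵢ}`. Then
`‖(A i - O) + (A j - O)‖² = 2R²(1 + cos (θᵢ - θⱼ))`, so it suffices to find two of the angles at
circular distance at most `2π/n`. Sorting the angles, the `n` gaps between cyclically consecutive
ones add up to `2π`, so one of them is at most `2π/n`.
-/

open Real

lemma exists_succ_sub_le_div (f : ℕ → ℝ) {n : ℕ} (hn : 0 < n) :
    ∃ k < n, f (k + 1) - f k ≤ (f n - f 0) / n := by
  have hsum : ∑ k ∈ Finset.range n, (f (k + 1) - f k) ≤ ∑ _k ∈ Finset.range n, (f n - f 0) / n := by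
    rw [Finset.sum_range_sub, Finset.sum_const, Finset.card_range, nsmul_eq_mul,
      mul_div_cancel₀ _ (by positivity)]
  simpa using Finset.exists_le_of_sum_le (Finset.nonempty_range_iff.2 hn.ne') hsum

lemma cos_two_pi_div_le_cos {n : ℕ} (hn : 2 ≤ n) {x : ℝ} (hx₀ : 0 ≤ x) (hx : x ≤ 2 * π / n) :
    cos (2 * π / n) ≤ cos x := by
  refine cos_le_cos_of_nonneg_of_le_pi hx₀ ?_ hx
  rw [div_le_iff₀ (by positivity)]
  have := mul_le_mul_of_nonneg_left (show (2 : ℝ) ≤ n by exact_mod_cast hn) pi_pos.le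
  linarith

lemma exists_ne_cos_le_cos_sub_of_monotone {n : ℕ} (hn : 2 ≤ n) {θ : Fin n → ℝ}
    (hθ : Monotone θ) (hspan : ∀ i j, θ i - θ j ≤ 2 * π) :
    ∃ i j, i ≠ j ∧ cos (2 * π / n) ≤ cos (θ i - θ j) := by
  have hn₀ : 0 < n := by omega
  let first : Fin n := ⟨0, hn₀⟩
  -- The angles in increasing order, closed up by the first one turned once around the circle.
  let f : ℕ → ℝ := fun k ↦ if h : k < n then θ ⟨k, h⟩ else θ first + 2 * π
  obtain ⟨k, hk, hgap⟩ := exists_succ_sub_le_div f hn₀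
  have htotal : f n - f 0 = 2 * π := by simp [f, hn₀, first]
  rw [htotal] at hgap
  by_cases hk₁ : k + 1 < n
  · refine ⟨⟨k + 1, hk₁⟩, ⟨k, hk⟩, by simp [Fin.ext_iff], ?_⟩
    simp only [f, dif_pos hk₁, dif_pos hk] at hgap
    exact cos_two_pi_div_le_cos hn (sub_nonneg.2 (hθ (by simp [Fin.le_def]))) hgap
  · refine ⟨⟨k, hk⟩, first, by simp [Fin.ext_iff, first]; omega, ?_⟩
    simp only [f, dif_neg hk₁, dif_pos hk] at hgap
    have hcos : cos (θ ⟨k, hk⟩ - θ first) = cos (θ first + 2 * π - θ ⟨k, hk⟩) := by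
      rw [← cos_neg, neg_sub, ← cos_add_two_pi, sub_add_eq_add_sub]
    rw [hcos]
    exact cos_two_pi_div_le_cos hn (by linarith [hspan ⟨k, hk⟩ first]) hgap

lemma exists_ne_cos_le_cos_sub {n : ℕ} (hn : 2 ≤ n) (θ : Fin n → ℝ)
    (hspan : ∀ i j, θ i - θ j ≤ 2 * π) :
    ∃ i j, i ≠ j ∧ cos (2 * π / n) ≤ cos (θ i - θ j) := by
  obtain ⟨i, j, hij, hcos⟩ :=
    exists_ne_cos_le_cos_sub_of_monotone hn (Tuple.monotone_sort θ) fun i j ↦ hspan _ _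
  exact ⟨_, _, (Tuple.sort θ).injective.ne hij, hcos⟩

lemma Complex.norm_add_sq_eq_add_cos_arg_sub (z w : ℂ) :
    ‖z + w‖ ^ 2 = ‖z‖ ^ 2 + ‖w‖ ^ 2 + 2 * ‖z‖ * ‖w‖ * Real.cos (z.arg - w.arg) := by
  rw [norm_add_sq_real, Complex.inner, Real.cos_sub, Complex.mul_re, Complex.conj_re,
    Complex.conj_im, ← z.norm_mul_cos_arg, ← z.norm_mul_sin_arg, ← w.norm_mul_cos_arg, ← w.norm_mul_sin_arg]
  ring

theorem exists_two_points_vector_sum_large_general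
    (n : ℕ) (hn : 2 ≤ n)
    (O : EuclideanSpace ℝ (Fin 2)) (R : ℝ)
    (A : Fin n → EuclideanSpace ℝ (Fin 2))
    (hdist : ∀ i : Fin n, dist O (A i) = R) :
    ∃ i j : Fin n, i ≠ j ∧
      ‖(A i -ᵥ O) + (A j -ᵥ O)‖ ≥ 2 * R * Real.cos (Real.pi / n) := by
  let e := Complex.orthonormalBasisOneI.repr.symm
  let z : Fin n → ℂ := fun i ↦ e (A i -ᵥ O)
  have hz : ∀ i, ‖z i‖ = R := fun i ↦ by
    rw [LinearIsometryEquiv.norm_map, ← dist_eq_norm_vsub', hdist]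
  obtain ⟨i, j, hij, hcos⟩ := exists_ne_cos_le_cos_sub hn (fun i ↦ (z i).arg) fun i j ↦ by
    linarith [Complex.neg_pi_lt_arg (z j), Complex.arg_le_pi (z i)]
  refine ⟨i, j, hij, le_of_pow_le_pow_left₀ two_ne_zero (norm_nonneg _) ?_⟩
  calc (2 * R * cos (π / n)) ^ 2 = 2 * R ^ 2 * (1 + cos (2 * π / n)) := by
        rw [mul_pow, cos_sq, mul_div_assoc']; ring
    _ ≤ 2 * R ^ 2 * (1 + cos ((z i).arg - (z j).arg)) := by gcongr
    _ = ‖z i + z j‖ ^ 2 := by rw [Complex.norm_add_sq_eq_add_cos_arg_sub, hz, hz]; ring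
    _ = ‖(A i -ᵥ O) + (A j -ᵥ O)‖ ^ 2 := by rw [← map_add, LinearIsometryEquiv.norm_map]

theorem exists_two_points_vector_sum_large
    (n : ℕ) (hn : 2 ≤ n)
    (O : EuclideanSpace ℝ (Fin 2)) (R : ℝ) (hR : 0 < R)
    (A : Fin n → EuclideanSpace ℝ (Fin 2))
    (hinj : Function.Injective A)
    (hdist : ∀ i : Fin n, dist O (A i) = R) :
    ∃ i j : Fin n, i ≠ j ∧
      ‖(A i -ᵥ O) + (A j -ᵥ O)‖ ≥ 2 * R * Real.cos (Real.pi / n) :=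
  exists_two_points_vector_sum_large_general n hn O R A hdist
end
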